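/- arXiv:2107.02768 — 6 statements merged into one kernel-verified Lean document; each statement's English description precedes it below -/
import Mathlib

section
/- (Condition (G) implies linear growth, radial convex case.) Assume Λ is nonnegative, its effective domain is strictly star-shaped in the control variable with respect to the origin, Λ is radially convex in the control variable, and let Q be a selection of the convex subdifferential ∂_r Λ(s,y,ru)_{r=1}. If for every M ∈ ℝ there exists R > 0 such that Λ(s,y,u) − Q(s,y,u) ≤ M whenever (s,y,u) ∈ Dom(Λ), u ∈ 𝒰 and |u| ≥ R, then Λ has linear growth from below: there exist α > 0 and d ≥ 0 such that Λ(s,y,u) ≥ α|u| − d for a.e. s ∈ [0,T] and every y ∈ ℝⁿ, u ∈ 𝒰. In fact, if R > 0 is such that Q(s,y,w) − Λ(s,y,w) ≥ 1 whenever (s,y,w) ∈ Dom(Λ), w ∈ 𝒰, |w| ≥ R, one may take α = 1/R and d = 2. -/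
open MeasureTheory Set Filter
open scoped ENNReal NNReal

noncomputable section

/-- Euclidean space `ℝ^k`. -/
abbrev Vec (k : ℕ) : Type := EuclideanSpace ℝ (Fin k)

/-- The control set is a nonempty cone. -/
def IsCone {k : ℕ} (U : Set (Vec k)) : Prop :=
  U.Nonempty ∧ ∀ u ∈ U, ∀ c : ℝ, 0 < c → c • u ∈ U

variable {n m : ℕ}

/-- The effective domain of the Lagrangian, inside `[0,T] × ℝⁿ × ℝᵐ`. -/
def domSet (T : ℝ) (L : ℝ → Vec n → Vec m → ℝ≥0∞) : Set (ℝ × Vec n × Vec m) :=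
  {p | p.1 ∈ Icc 0 T ∧ L p.1 p.2.1 p.2.2 ≠ ⊤}

/-- Boundary of the effective domain relative to `[0,T] × ℝⁿ × ℝᵐ`. -/
def bdryDom (T : ℝ) (L : ℝ → Vec n → Vec m → ℝ≥0∞) : Set (ℝ × Vec n × Vec m) :=
  closure (domSet T L) ∩
    closure ((Icc (0:ℝ) T ×ˢ (univ : Set (Vec n × Vec m))) \ domSet T L)

/-- Distance to the boundary of the effective domain. -/
def distBdry (T : ℝ) (L : ℝ → Vec n → Vec m → ℝ≥0∞) (p : ℝ × Vec n × Vec m) : ℝ :=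
  Metric.infDist p (bdryDom T L)

/-- The effective domain is strictly star-shaped in the control variable. -/
def StarShapedDom (T : ℝ) (L : ℝ → Vec n → Vec m → ℝ≥0∞) : Prop :=
  ∀ᵐ s ∂(volume : Measure ℝ), s ∈ Icc (0:ℝ) T → ∀ (y : Vec n) (u : Vec m),
    L s y u ≠ ⊤ → ∀ r : ℝ, 0 < r → r ≤ 1 → L s y (r • u) ≠ ⊤

/-- Linear growth from below: `L(s,y,u) ≥ α‖u‖ − d` for `u ∈ U`. -/
def LinearGrowth (T : ℝ) (L : ℝ → Vec n → Vec m → ℝ≥0∞) (U : Set (Vec m))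
    (α d : ℝ) : Prop :=
  ∀ᵐ s ∂(volume : Measure ℝ), s ∈ Icc (0:ℝ) T → ∀ y : Vec n, ∀ u ∈ U,
    ENNReal.ofReal (α * ‖u‖ - d) ≤ L s y u

/-- Condition (S), with explicit constants `κ, A, γ, ε`. -/
def ConditionSWith (T : ℝ) (L : ℝ → Vec n → Vec m → ℝ≥0∞) (U : Set (Vec m))
    (κ A : ℝ) (γ : ℝ → ℝ) (ε : ℝ) : Prop :=
  0 ≤ κ ∧ 0 ≤ A ∧ (∀ s, 0 ≤ γ s) ∧ IntegrableOn γ (Icc 0 T) ∧ 0 < ε ∧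
  ∀ᵐ s ∂(volume : Measure ℝ), s ∈ Icc (0:ℝ) T →
    ∀ s₁ ∈ Icc (s - ε) (s + ε) ∩ Icc (0:ℝ) T, ∀ s₂ ∈ Icc (s - ε) (s + ε) ∩ Icc (0:ℝ) T,
    ∀ y : Vec n, ∀ u ∈ U, L s₁ y u ≠ ⊤ → L s₂ y u ≠ ⊤ →
      ENNReal.ofReal |(L s₂ y u).toReal - (L s₁ y u).toReal| ≤
        (ENNReal.ofReal κ * L s y u + ENNReal.ofReal (A * ‖u‖ + γ s)) *
          ENNReal.ofReal |s₂ - s₁|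

/-- The constant `c_t(B) = (B + d(T−t))/(α(T−t))`. -/
def cLow (T α d B t : ℝ) : ℝ := (B + d * (T - t)) / (α * (T - t))

/-- The constant `Φ(B) = κB + (A/α)(B + dT) + ‖γ‖₁`. -/
def PhiB (T κ A : ℝ) (γ : ℝ → ℝ) (α d B : ℝ) : ℝ :=
  κ * B + A / α * (B + d * T) + ∫ s in Icc (0:ℝ) T, γ s

/-- Radial convexity in the control variable. -/
def RadiallyConvex (T : ℝ) (L : ℝ → Vec n → Vec m → ℝ≥0∞) (U : Set (Vec m)) : Prop :=
  ∀ᵐ s ∂(volume : Measure ℝ), s ∈ Icc (0:ℝ) T → ∀ y : Vec n, ∀ u ∈ U,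
    ∀ r₁ r₂ : ℝ, 0 < r₁ → 0 < r₂ → ∀ a c : ℝ, 0 ≤ a → 0 ≤ c → a + c = 1 →
      L s y ((a * r₁ + c * r₂) • u) ≤
        ENNReal.ofReal a * L s y (r₁ • u) + ENNReal.ofReal c * L s y (r₂ • u)

/-- A selection of the radial convex subdifferential `∂_r L(s,y,ru)` at `r = 1`. -/
def IsRadialSelection (T : ℝ) (L : ℝ → Vec n → Vec m → ℝ≥0∞) (U : Set (Vec m))
    (Q : ℝ → Vec n → Vec m → ℝ) : Prop :=
  ∀ s ∈ Icc (0:ℝ) T, ∀ y : Vec n, ∀ u ∈ U, L s y u ≠ ⊤ → ∀ r : ℝ, 0 < r →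
    ENNReal.ofReal ((L s y u).toReal + Q s y u * (r - 1)) ≤ L s y (r • u)

/-- `L` is bounded on the bounded sets that are well-inside its domain. -/
def BddWellInside (T : ℝ) (L : ℝ → Vec n → Vec m → ℝ≥0∞) : Prop :=
  ∀ C > (0:ℝ), ∀ ρ > (0:ℝ), ∃ M : ℝ,
    ∀ s ∈ Icc (0:ℝ) T, ∀ (y : Vec n) (u : Vec m), L s y u ≠ ⊤ →
      ‖y‖ + ‖u‖ ≤ C → ρ ≤ distBdry T L (s, y, u) → L s y u ≤ ENNReal.ofReal M

/-- Condition (H_B^δ), radial convex form. -/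
def ConditionH (T : ℝ) (L : ℝ → Vec n → Vec m → ℝ≥0∞) (U : Set (Vec m))
    (α d κ A : ℝ) (γ : ℝ → ℝ) (δ B : ℝ) : Prop :=
  ∀ K ≥ (0:ℝ), ∃ ν > (0:ℝ), ∃ c > cLow T α d B δ, ∃ Q : ℝ → Vec n → Vec m → ℝ,
    IsRadialSelection T L U Q ∧
    ∀ ρ > (0:ℝ), ∃ Sup Inf : ℝ,
      (∀ s ∈ Icc (0:ℝ) T, ∀ y : Vec n, ‖y‖ ≤ K → ∀ u ∈ U, ν ≤ ‖u‖ → L s y u ≠ ⊤ →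
        (L s y u).toReal - Q s y u ≤ Sup) ∧
      (∀ s ∈ Icc (0:ℝ) T, ∀ y : Vec n, ‖y‖ ≤ K → ∀ u ∈ U, ‖u‖ < c → L s y u ≠ ⊤ →
        ρ ≤ distBdry T L (s, y, u) → Inf ≤ (L s y u).toReal - Q s y u) ∧
      Sup + 2 * PhiB T κ A γ α d B < Inf

/-- Condition (M_B^δ), radial convex form. -/
def ConditionM (T : ℝ) (L : ℝ → Vec n → Vec m → ℝ≥0∞) (U : Set (Vec m))
    (α d : ℝ) (δ B : ℝ) : Prop :=
  ∀ K ≥ (0:ℝ), ∃ ν > (0:ℝ), ∃ c > cLow T α d B δ, ∃ Q : ℝ → Vec n → Vec m → ℝ,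
    IsRadialSelection T L U Q ∧
    ∀ ρ > (0:ℝ),
      (∃ Inf : ℝ, ∀ s ∈ Icc (0:ℝ) T, ∀ y : Vec n, ‖y‖ ≤ K → ∀ u ∈ U, ‖u‖ < c →
        L s y u ≠ ⊤ → ρ ≤ distBdry T L (s, y, u) → Inf ≤ (L s y u).toReal - Q s y u) ∧
      (∃ Sup : ℝ, ∀ s ∈ Icc (0:ℝ) T, ∀ y : Vec n, ‖y‖ ≤ K → ∀ u ∈ U, ν ≤ ‖u‖ →
        L s y u ≠ ⊤ → (L s y u).toReal - Q s y u ≤ Sup)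

/-- Hypothesis (h₁): the effective domain is a product `[0,T] × D`. -/
def Hyp1 (T : ℝ) (L : ℝ → Vec n → Vec m → ℝ≥0∞) : Prop :=
  ∃ D : Set (Vec n × Vec m), domSet T L = Icc (0:ℝ) T ×ˢ D

/-- Hypothesis (h₂): `L` tends uniformly to `+∞` at the boundary of its domain. -/
def Hyp2 (T : ℝ) (L : ℝ → Vec n → Vec m → ℝ≥0∞) (U : Set (Vec m)) : Prop :=
  ∀ M : ℝ, ∃ ρ > (0:ℝ), ∀ s ∈ Icc (0:ℝ) T, ∀ y : Vec n, ∀ u ∈ U, L s y u ≠ ⊤ →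
    distBdry T L (s, y, u) < ρ → ENNReal.ofReal M ≤ L s y u

/-- The Bolza functional `J_t(y,u)`. -/
def Jfun (T : ℝ) (L : ℝ → Vec n → Vec m → ℝ≥0∞) (g : Vec n → ℝ≥0∞)
    (t : ℝ) (y : ℝ → Vec n) (u : ℝ → Vec m) : ℝ≥0∞ :=
  (∫⁻ s in Icc t T, L s (y s) (u s)) + g (y T)

/-- An admissible pair for problem (P_{t,x}). -/
def Admissible (T : ℝ) (L : ℝ → Vec n → Vec m → ℝ≥0∞) (U : Set (Vec m))
    (b : Vec n → Vec m →L[ℝ] Vec n) (g : Vec n → ℝ≥0∞) (S : Set (Vec n))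
    (t : ℝ) (x : Vec n) (y : ℝ → Vec n) (u : ℝ → Vec m) : Prop :=
  Measurable u ∧ (∀ᵐ s ∂(volume : Measure ℝ), s ∈ Icc t T → u s ∈ U) ∧
  IntegrableOn (fun τ => b (y τ) (u τ)) (Icc t T) ∧
  (∀ s ∈ Icc t T, y s = x + ∫ τ in Icc t s, b (y τ) (u τ)) ∧
  (∀ s ∈ Icc t T, y s ∈ S) ∧
  Jfun T L g t y u ≠ ⊤

/-- The value `inf (P_{t,x})`. -/
def infP (T : ℝ) (L : ℝ → Vec n → Vec m → ℝ≥0∞) (U : Set (Vec m))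
    (b : Vec n → Vec m →L[ℝ] Vec n) (g : Vec n → ℝ≥0∞) (S : Set (Vec n))
    (t : ℝ) (x : Vec n) : ℝ≥0∞ :=
  sInf {v | ∃ y u, Admissible T L U b g S t x y u ∧ Jfun T L g t y u = v}

/-- A minimizing sequence for (P_{t,x}). -/
def MinimizingSeq (T : ℝ) (L : ℝ → Vec n → Vec m → ℝ≥0∞) (U : Set (Vec m))
    (b : Vec n → Vec m →L[ℝ] Vec n) (g : Vec n → ℝ≥0∞) (S : Set (Vec n))
    (t : ℝ) (x : Vec n) (y : ℕ → ℝ → Vec n) (u : ℕ → ℝ → Vec m) : Prop :=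
  (∀ j, Admissible T L U b g S t x (y j) (u j)) ∧
  Tendsto (fun j => Jfun T L g t (y j) (u j)) atTop (nhds (infP T L U b g S t x))

/-!
On the ray through `u`, the point `w` with `‖w‖ = R` lies in the effective domain by
star-shapedness, and `u = ρ • w` with `ρ = ‖u‖ / R ≥ 1`. The subgradient inequality at `w` gives
`L u ≥ L w + Q w (ρ - 1) ≥ L w + (1 + L w)(ρ - 1) ≥ ρ - 1`, i.e. `L u ≥ ‖u‖ / R - 1`.
Condition (G) with `M = -1` provides such an `R`.
-/

theorem LinearGrowth.mono_right {T : ℝ} {L : ℝ → Vec n → Vec m → ℝ≥0∞} {U : Set (Vec m)}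
    {α d d' : ℝ} (h : LinearGrowth T L U α d) (hd : d ≤ d') : LinearGrowth T L U α d' := by
  filter_upwards [h] with s hs hsT y u hu
  exact le_trans (ENNReal.ofReal_le_ofReal (by linarith)) (hs hsT y u hu)

theorem IsRadialSelection.ofReal_sub_one_le {T : ℝ} {L : ℝ → Vec n → Vec m → ℝ≥0∞}
    {U : Set (Vec m)} {Q : ℝ → Vec n → Vec m → ℝ} (hQ : IsRadialSelection T L U Q)
    {s : ℝ} (hs : s ∈ Icc 0 T) (y : Vec n) {w : Vec m} (hw : w ∈ U) (hLw : L s y w ≠ ⊤)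
    (hQw : 1 ≤ Q s y w - (L s y w).toReal) {ρ : ℝ} (hρ : 1 ≤ ρ) :
    ENNReal.ofReal (ρ - 1) ≤ L s y (ρ • w) := by
  refine le_trans (ENNReal.ofReal_le_ofReal ?_) (hQ s hs y w hw hLw ρ (by linarith))
  have hL0 : 0 ≤ (L s y w).toReal := ENNReal.toReal_nonneg
  nlinarith [mul_nonneg (sub_nonneg.2 hQw) (sub_nonneg.2 hρ)]

theorem linearGrowth_of_one_le_sub {T : ℝ} {L : ℝ → Vec n → Vec m → ℝ≥0∞} {U : Set (Vec m)}
    (hU : IsCone U) (hstar : StarShapedDom T L) {Q : ℝ → Vec n → Vec m → ℝ}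
    (hQ : IsRadialSelection T L U Q) {R : ℝ} (hR : 0 < R)
    (hQR : ∀ s ∈ Icc (0:ℝ) T, ∀ (y : Vec n), ∀ w ∈ U, L s y w ≠ ⊤ → R ≤ ‖w‖ →
      1 ≤ Q s y w - (L s y w).toReal) :
    LinearGrowth T L U (1 / R) 1 := by
  filter_upwards [hstar] with s hst hs y u hu
  rcases eq_or_ne (L s y u) ⊤ with hLu | hLu
  · simp [hLu]
  rcases lt_or_ge ‖u‖ R with hsmall | hlarge
  · have : 1 / R * ‖u‖ - 1 ≤ 0 := by
      rw [one_div_mul_eq_div, sub_nonpos, div_le_one hR]; exact hsmall.le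
    rw [ENNReal.ofReal_eq_zero.mpr this]
    exact zero_le
  have hu0 : 0 < ‖u‖ := hR.trans_le hlarge
  have hr0 : 0 < R / ‖u‖ := by positivity
  have hwU : (R / ‖u‖) • u ∈ U := hU.2 u hu _ hr0
  have hLw : L s y ((R / ‖u‖) • u) ≠ ⊤ :=
    hst hs y u hLu _ hr0 ((div_le_one hu0).mpr hlarge)
  have hnorm : R ≤ ‖(R / ‖u‖) • u‖ := by
    rw [norm_smul, Real.norm_of_nonneg hr0.le, div_mul_cancel₀ _ hu0.ne']
  have hρu : (‖u‖ / R) • (R / ‖u‖) • u = u := by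
    rw [smul_smul, div_mul_div_cancel₀ hR.ne', div_self hu0.ne', one_smul]
  have := hQ.ofReal_sub_one_le hs y hwU hLw (hQR s hs y _ hwU hLw hnorm)
    ((one_le_div hR).mpr hlarge)
  rwa [hρu, ← one_div_mul_eq_div] at this

theorem stmt_2_general (T : ℝ) (n m : ℕ)
    (L : ℝ → Vec n → Vec m → ℝ≥0∞)
    (U : Set (Vec m)) (hU : IsCone U)
    (hstar : StarShapedDom T L)
    (Q : ℝ → Vec n → Vec m → ℝ) (hQ : IsRadialSelection T L U Q)
    (hG : ∀ M : ℝ, ∃ R > (0:ℝ), ∀ s ∈ Icc (0:ℝ) T, ∀ (y : Vec n), ∀ u ∈ U,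
      L s y u ≠ ⊤ → R ≤ ‖u‖ → (L s y u).toReal - Q s y u ≤ M) :
    (∃ α > (0:ℝ), ∃ d : ℝ, 0 ≤ d ∧ LinearGrowth T L U α d) ∧
    ∀ R > (0:ℝ),
      (∀ s ∈ Icc (0:ℝ) T, ∀ (y : Vec n), ∀ w ∈ U, L s y w ≠ ⊤ → R ≤ ‖w‖ →
        1 ≤ Q s y w - (L s y w).toReal) →
      LinearGrowth T L U (1 / R) 2 := by
  refine ⟨?_, fun R hR hQR =>
    (linearGrowth_of_one_le_sub hU hstar hQ hR hQR).mono_right one_le_two⟩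
  obtain ⟨R, hR, hGR⟩ := hG (-1)
  refine ⟨1 / R, by positivity, 1, zero_le_one, linearGrowth_of_one_le_sub hU hstar hQ hR ?_⟩
  intro s hs y w hw hLw hRw
  linarith [hGR s hs y w hw hLw hRw]

/-- Condition (G) implies linear growth, radial convex case. -/
theorem stmt_2 (T : ℝ) (hT : 0 < T) (n m : ℕ)
    (L : ℝ → Vec n → Vec m → ℝ≥0∞)
    (hmeas : Measurable fun p : ℝ × Vec n × Vec m => L p.1 p.2.1 p.2.2)
    (U : Set (Vec m)) (hU : IsCone U)
    (hstar : StarShapedDom T L)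
    (hconv : RadiallyConvex T L U)
    (Q : ℝ → Vec n → Vec m → ℝ) (hQ : IsRadialSelection T L U Q)
    (hG : ∀ M : ℝ, ∃ R > (0:ℝ), ∀ s ∈ Icc (0:ℝ) T, ∀ (y : Vec n), ∀ u ∈ U,
      L s y u ≠ ⊤ → R ≤ ‖u‖ → (L s y u).toReal - Q s y u ≤ M) :
    (∃ α > (0:ℝ), ∃ d : ℝ, 0 ≤ d ∧ LinearGrowth T L U α d) ∧
    ∀ R > (0:ℝ),
      (∀ s ∈ Icc (0:ℝ) T, ∀ (y : Vec n), ∀ w ∈ U, L s y w ≠ ⊤ → R ≤ ‖w‖ →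
        1 ≤ Q s y w - (L s y w).toReal) →
      LinearGrowth T L U (1 / R) 2 :=
  stmt_2_general T n m L U hU hstar Q hQ hG
end
end

section
/- (Condition (G) implies linear growth, partial differentiable case.) Assume Λ is nonnegative, its effective domain is strictly star-shaped in the control variable with respect to the origin, and the partial derivative D_uΛ(s,y,u) := lim_{h→0} (Λ(s,y,u+hu) − Λ(s,y,u))/h exists at every (s,y,u) ∈ Dom(Λ) with u ∈ 𝒰. If for every M ∈ ℝ there exists R > 0 such that Λ(s,y,u) − D_uΛ(s,y,u) ≤ M whenever (s,y,u) ∈ Dom(Λ), u ∈ 𝒰 and |u| ≥ R, then Λ has linear growth from below: there exist α > 0 and d ≥ 0 such that Λ(s,y,u) ≥ α|u| − d for a.e. s ∈ [0,T] and every y ∈ ℝⁿ, u ∈ 𝒰. In fact, if R > 0 is such that D_uΛ(s,y,w) − Λ(s,y,w) ≥ 1 whenever (s,y,w) ∈ Dom(Λ), w ∈ 𝒰, |w| ≥ R, one may take α = 1/R and d = 2. -/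
/-!
Along the ray `x ↦ x • u`, the function `F x = Λ(s, y, x u)` satisfies
`x F'(x) - F(x) = D_uΛ(s, y, x u) - Λ(s, y, x u) ≥ 1` as long as `‖x u‖ ≥ R`, so
`(F x + 1) / x` is nondecreasing on `[R / ‖u‖, 1]`. Comparing the endpoints and using `F ≥ 0`
gives `Λ(s, y, u) + 1 ≥ ‖u‖ / R`.
-/

open MeasureTheory Set Filter
open scoped ENNReal NNReal

noncomputable section

variable {n m : ℕ}

theorem monotoneOn_add_const_div_of_le_mul_deriv_sub {f f' : ℝ → ℝ} {a b c : ℝ} (ha : 0 < a)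
    (hf : ∀ x ∈ Icc a b, HasDerivAt f (f' x) x) (h : ∀ x ∈ Ioo a b, c ≤ x * f' x - f x) :
    MonotoneOn (fun x => (f x + c) / x) (Icc a b) := by
  have hquot : ∀ x ∈ Icc a b,
      HasDerivAt (fun x => (f x + c) / x) ((f' x * x - (f x + c) * 1) / x ^ 2) x :=
    fun x hx => ((hf x hx).add_const c).div (hasDerivAt_id x) (ha.trans_le hx.1).ne'
  refine monotoneOn_of_hasDerivWithinAt_nonneg (convex_Icc a b)
    (fun x hx => (hquot x hx).continuousAt.continuousWithinAt)
    (fun x hx => (hquot x (interior_subset hx)).hasDerivWithinAt) fun x hx => ?_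
  rw [interior_Icc] at hx
  have hx_cond := h x hx
  exact div_nonneg (by nlinarith) (sq_nonneg x)

theorem hasDerivAt_smul_of_hasDerivAt_one_add_smul {E F : Type*} [AddCommGroup E] [Module ℝ E]
    [NormedAddCommGroup F] [NormedSpace ℝ F] {g : E → F} {u : E} {x : ℝ} {D : F} (hx : x ≠ 0)
    (hD : HasDerivAt (fun h : ℝ => g ((1 + h) • x • u)) D 0) :
    HasDerivAt (fun t : ℝ => g (t • u)) (x⁻¹ • D) x := by
  have hrescale : HasDerivAt (fun t : ℝ => t / x - 1) x⁻¹ x := by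
    simpa using ((hasDerivAt_id x).div_const x).sub_const 1
  have hcomp := (show x / x - 1 = 0 by simp [hx]) ▸ hD |>.scomp x hrescale
  convert hcomp using 1
  ext t
  simp [smul_smul, div_mul_cancel₀ t hx]

theorem ofReal_norm_div_sub_one_le_of_one_le_deriv_sub {E : Type*} [NormedAddCommGroup E]
    [NormedSpace ℝ E] {ℓ : E → ℝ≥0∞} {D : E → ℝ} {U : Set E} {R : ℝ} (hR : 0 < R)
    (hU : ∀ u ∈ U, ∀ c : ℝ, 0 < c → c • u ∈ U)
    (hstar : ∀ u, ℓ u ≠ ⊤ → ∀ r : ℝ, 0 < r → r ≤ 1 → ℓ (r • u) ≠ ⊤)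
    (hdiff : ∀ u ∈ U, ℓ u ≠ ⊤ → HasDerivAt (fun h : ℝ => (ℓ ((1 + h) • u)).toReal) (D u) 0)
    (hcond : ∀ w ∈ U, ℓ w ≠ ⊤ → R ≤ ‖w‖ → 1 ≤ D w - (ℓ w).toReal) :
    ∀ u ∈ U, ENNReal.ofReal (‖u‖ / R - 1) ≤ ℓ u := by
  intro u hu
  by_cases hfin : ℓ u = ⊤
  · simp [hfin]
  rcases le_or_gt ‖u‖ R with hle | hgt
  · rw [ENNReal.ofReal_eq_zero.2 (by rw [sub_nonpos, div_le_one hR]; exact hle)]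
    exact zero_le
  have hu0 : 0 < ‖u‖ := hR.trans hgt
  set a := R / ‖u‖ with ha_def
  have ha : 0 < a := div_pos hR hu0
  have ha1 : a < 1 := (div_lt_one hu0).2 hgt
  set F : ℝ → ℝ := fun x => (ℓ (x • u)).toReal
  have hray : ∀ x ∈ Icc a 1, x • u ∈ U ∧ ℓ (x • u) ≠ ⊤ :=
    fun x hx => ⟨hU u hu x (ha.trans_le hx.1), hstar u hfin x (ha.trans_le hx.1) hx.2⟩
  have hF : ∀ x ∈ Icc a 1, HasDerivAt F (D (x • u) / x) x := fun x hx => by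
    rw [div_eq_inv_mul]
    exact hasDerivAt_smul_of_hasDerivAt_one_add_smul (g := fun v => (ℓ v).toReal)
      (ha.trans_le hx.1).ne' (hdiff _ (hray x hx).1 (hray x hx).2)
  have hFcond : ∀ x ∈ Ioo a 1, 1 ≤ x * (D (x • u) / x) - F x := fun x hx => by
    have hx0 : 0 < x := ha.trans hx.1
    have hnorm : R ≤ ‖x • u‖ := by
      rw [norm_smul, Real.norm_of_nonneg hx0.le, ← div_le_iff₀ hu0]
      exact hx.1.le
    obtain ⟨hxU, hxfin⟩ := hray x (Ioo_subset_Icc_self hx)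
    rw [mul_div_cancel₀ _ hx0.ne']
    exact hcond _ hxU hxfin hnorm
  have hmono := monotoneOn_add_const_div_of_le_mul_deriv_sub ha hF hFcond
    (left_mem_Icc.2 ha1.le) (right_mem_Icc.2 ha1.le) ha1.le
  have hFa : 0 ≤ F a := ENNReal.toReal_nonneg
  have hendpoints : ‖u‖ / R ≤ (ℓ u).toReal + 1 :=
    calc ‖u‖ / R = 1 / a := by rw [ha_def, one_div_div]
      _ ≤ (F a + 1) / a := by gcongr; linarith
      _ ≤ (F 1 + 1) / 1 := hmono
      _ = (ℓ u).toReal + 1 := by simp [F]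
  rw [← ENNReal.ofReal_toReal hfin]
  exact ENNReal.ofReal_le_ofReal (by linarith)

theorem linearGrowth_of_one_le_deriv_sub {T : ℝ} {L : ℝ → Vec n → Vec m → ℝ≥0∞}
    {U : Set (Vec m)} {DL : ℝ → Vec n → Vec m → ℝ} {R : ℝ} (hR : 0 < R)
    (hU : ∀ u ∈ U, ∀ c : ℝ, 0 < c → c • u ∈ U) (hstar : StarShapedDom T L)
    (hdiff : ∀ s ∈ Icc (0:ℝ) T, ∀ (y : Vec n), ∀ u ∈ U, L s y u ≠ ⊤ →
      HasDerivAt (fun h : ℝ => (L s y ((1 + h) • u)).toReal) (DL s y u) 0)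
    (hcond : ∀ s ∈ Icc (0:ℝ) T, ∀ (y : Vec n), ∀ w ∈ U, L s y w ≠ ⊤ → R ≤ ‖w‖ →
      1 ≤ DL s y w - (L s y w).toReal) :
    LinearGrowth T L U (1 / R) 2 := by
  filter_upwards [hstar] with s hstar_s hs y u hu
  calc ENNReal.ofReal (1 / R * ‖u‖ - 2) ≤ ENNReal.ofReal (‖u‖ / R - 1) :=
        ENNReal.ofReal_le_ofReal (by rw [one_div_mul_eq_div]; linarith)
    _ ≤ L s y u :=
        ofReal_norm_div_sub_one_le_of_one_le_deriv_sub hR hU (hstar_s hs y) (hdiff s hs y)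
          (hcond s hs y) u hu

theorem stmt_3_general (T : ℝ) (n m : ℕ)
    (L : ℝ → Vec n → Vec m → ℝ≥0∞)
    (U : Set (Vec m)) (hU : IsCone U)
    (hstar : StarShapedDom T L)
    (DL : ℝ → Vec n → Vec m → ℝ)
    (hdiff : ∀ s ∈ Icc (0:ℝ) T, ∀ (y : Vec n), ∀ u ∈ U, L s y u ≠ ⊤ →
      (∀ᶠ h : ℝ in nhds 0, L s y ((1 + h) • u) ≠ ⊤) ∧
      HasDerivAt (fun h : ℝ => (L s y ((1 + h) • u)).toReal) (DL s y u) 0)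
    (hG : ∀ M : ℝ, ∃ R > (0:ℝ), ∀ s ∈ Icc (0:ℝ) T, ∀ (y : Vec n), ∀ u ∈ U,
      L s y u ≠ ⊤ → R ≤ ‖u‖ → (L s y u).toReal - DL s y u ≤ M) :
    (∃ α > (0:ℝ), ∃ d : ℝ, 0 ≤ d ∧ LinearGrowth T L U α d) ∧
    ∀ R > (0:ℝ),
      (∀ s ∈ Icc (0:ℝ) T, ∀ (y : Vec n), ∀ w ∈ U, L s y w ≠ ⊤ → R ≤ ‖w‖ →
        1 ≤ DL s y w - (L s y w).toReal) →
      LinearGrowth T L U (1 / R) 2 := by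
  have growth := fun (R : ℝ) (hR : 0 < R) => linearGrowth_of_one_le_deriv_sub hR hU.2 hstar
    (fun s hs y u hu hfin => (hdiff s hs y u hu hfin).2)
  obtain ⟨R, hR, hRG⟩ := hG (-1)
  exact ⟨⟨1 / R, by positivity, 2, zero_le_two,
    growth R hR fun s hs y w hw hfin hRw => by linarith [hRG s hs y w hw hfin hRw]⟩, growth⟩

/-- Condition (G) implies linear growth, partial differentiable case. -/
theorem stmt_3 (T : ℝ) (hT : 0 < T) (n m : ℕ)
    (L : ℝ → Vec n → Vec m → ℝ≥0∞)
    (hmeas : Measurable fun p : ℝ × Vec n × Vec m => L p.1 p.2.1 p.2.2)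
    (U : Set (Vec m)) (hU : IsCone U)
    (hstar : StarShapedDom T L)
    (DL : ℝ → Vec n → Vec m → ℝ)
    (hdiff : ∀ s ∈ Icc (0:ℝ) T, ∀ (y : Vec n), ∀ u ∈ U, L s y u ≠ ⊤ →
      (∀ᶠ h : ℝ in nhds 0, L s y ((1 + h) • u) ≠ ⊤) ∧
      HasDerivAt (fun h : ℝ => (L s y ((1 + h) • u)).toReal) (DL s y u) 0)
    (hG : ∀ M : ℝ, ∃ R > (0:ℝ), ∀ s ∈ Icc (0:ℝ) T, ∀ (y : Vec n), ∀ u ∈ U,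
      L s y u ≠ ⊤ → R ≤ ‖u‖ → (L s y u).toReal - DL s y u ≤ M) :
    (∃ α > (0:ℝ), ∃ d : ℝ, 0 ≤ d ∧ LinearGrowth T L U α d) ∧
    ∀ R > (0:ℝ),
      (∀ s ∈ Icc (0:ℝ) T, ∀ (y : Vec n), ∀ w ∈ U, L s y w ≠ ⊤ → R ≤ ‖w‖ →
        1 ≤ DL s y w - (L s y w).toReal) →
      LinearGrowth T L U (1 / R) 2 :=
  stmt_3_general T n m L U hU hstar DL hdiff hG
end
end

section
/- Assume Λ is radially convex in the control variable, bounded on the bounded sets that are well-inside Dom(Λ), and let Q be a selection of ∂_r Λ(s,y,ru)_{r=1}. Then for every c > 0, ρ > 0 and K ≥ 0, the infimum of Λ(s,y,u) − Q(s,y,u) over the set {(s,y,u) ∈ Dom(Λ) : s ∈ [0,T], |y| ≤ K, u ∈ 𝒰, |u| < c, dist((s,y,u), ∂Dom(Λ)) ≥ ρ} is strictly greater than −∞. -/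
/-! For `r = 1 + δ` with `δ = ρ / (2c)`, the point `(s, y, r u)` lies within `ρ / 2` of `(s, y, u)`,
so it stays in the domain, at distance at least `ρ / 2` from its boundary, with norm at most
`K + c + ρ`; hence `L(s, y, r u) ≤ M` by boundedness well inside the domain. The subgradient
inequality `L(s, y, u) + Q(s, y, u) δ ≤ L(s, y, r u)` then gives `Q ≤ M / δ`, and since `L ≥ 0`,
`L - Q ≥ -M / δ`. -/

open MeasureTheory Set Filter
open scoped ENNReal NNReal

noncomputable section

variable {n m : ℕ}

theorem IsPreconnected.inter_closure_inter_closure_diff_nonempty {X : Type*}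
    [TopologicalSpace X] {A D S : Set X} (hS : IsPreconnected S) (hSA : S ⊆ A) {x z : X}
    (hx : x ∈ S ∩ D) (hz : z ∈ S \ D) : (S ∩ (closure D ∩ closure (A \ D))).Nonempty :=
  isPreconnected_closed_iff.mp hS _ _ isClosed_closure isClosed_closure
    (fun w hw => (em (w ∈ D)).imp (subset_closure ·) (subset_closure ⟨hSA hw, ·⟩))
    ⟨x, hx.1, subset_closure hx.2⟩ ⟨z, hz.1, subset_closure ⟨hSA hz.1, hz.2⟩⟩

theorem ne_top_of_dist_lt_distBdry {T : ℝ} {L : ℝ → Vec n → Vec m → ℝ≥0∞} {s : ℝ}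
    (hs : s ∈ Icc 0 T) {y : Vec n} {u v : Vec m} (hu : L s y u ≠ ⊤)
    (hvu : dist v u < distBdry T L (s, y, u)) : L s y v ≠ ⊤ := by
  -- Otherwise the segment from `(s,y,u)` to `(s,y,v)` crosses `bdryDom T L`.
  intro hv
  set S := (fun w : Vec m => (s, y, w)) '' segment ℝ u v
  have hSA : S ⊆ Icc 0 T ×ˢ univ := by
    rintro _ ⟨w, -, rfl⟩
    exact ⟨hs, trivial⟩
  have hS : IsPreconnected S :=
    (convex_segment u v).isPreconnected.image _
      (by fun_prop : Continuous fun w : Vec m => (s, y, w)).continuousOn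
  obtain ⟨_, ⟨w, hw, rfl⟩, hbdry⟩ := hS.inter_closure_inter_closure_diff_nonempty hSA
    (D := domSet T L) (x := (s, y, u)) (z := (s, y, v)) ⟨⟨u, left_mem_segment ℝ u v, rfl⟩, hs, hu⟩
    ⟨⟨v, right_mem_segment ℝ u v, rfl⟩, fun h => h.2 hv⟩
  have hwu : dist u w ≤ dist v u :=
    Metric.mem_closedBall'.mp ((convex_closedBall u _).segment_subset
      (Metric.mem_closedBall_self dist_nonneg) (Metric.mem_closedBall.mpr le_rfl) hw)
  have : distBdry T L (s, y, u) ≤ dist u w :=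
    (Metric.infDist_le_dist_of_mem hbdry).trans_eq (by simp [Prod.dist_eq])
  linarith

theorem IsRadialSelection.toReal_add_mul_le {T : ℝ} {L : ℝ → Vec n → Vec m → ℝ≥0∞}
    {U : Set (Vec m)} {Q : ℝ → Vec n → Vec m → ℝ} (hQ : IsRadialSelection T L U Q)
    {s : ℝ} (hs : s ∈ Icc 0 T) (y : Vec n) {u : Vec m} (hu : u ∈ U) (hfin : L s y u ≠ ⊤)
    {r : ℝ} (hr : 0 < r) (hfin' : L s y (r • u) ≠ ⊤) :
    (L s y u).toReal + Q s y u * (r - 1) ≤ (L s y (r • u)).toReal :=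
  (ENNReal.ofReal_le_iff_le_toReal hfin').mp (hQ s hs y u hu hfin r hr)

theorem stmt_5_general (T : ℝ) (n m : ℕ)
    (L : ℝ → Vec n → Vec m → ℝ≥0∞)
    (U : Set (Vec m))
    (hbdd : BddWellInside T L)
    (Q : ℝ → Vec n → Vec m → ℝ) (hQ : IsRadialSelection T L U Q)
    (c ρ K : ℝ) (hc : 0 < c) (hρ : 0 < ρ) (hK : 0 ≤ K) :
    ∃ I : ℝ, ∀ s ∈ Icc (0:ℝ) T, ∀ y : Vec n, ‖y‖ ≤ K → ∀ u ∈ U, ‖u‖ < c →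
      L s y u ≠ ⊤ → ρ ≤ distBdry T L (s, y, u) → I ≤ (L s y u).toReal - Q s y u := by
  set δ := ρ / (2 * c)
  have hδ : 0 < δ := by positivity
  obtain ⟨M, hM⟩ := hbdd (K + c + ρ) (by positivity) (ρ / 2) (by positivity)
  refine ⟨-(max M 0 / δ), fun s hs y hy u hu huc hfin hdist => ?_⟩
  have hδu : δ * ‖u‖ < ρ / 2 := by
    calc δ * ‖u‖ < δ * c := by gcongr
      _ = ρ / 2 := by simp only [δ]; field_simp
  have hmove : dist ((1 + δ) • u) u < ρ / 2 := by
    rwa [dist_eq_norm, add_smul, one_smul, add_sub_cancel_left, norm_smul,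
      Real.norm_of_nonneg hδ.le]
  have hfin' : L s y ((1 + δ) • u) ≠ ⊤ := ne_top_of_dist_lt_distBdry hs hfin (by linarith)
  have hdist' : ρ / 2 ≤ distBdry T L (s, y, (1 + δ) • u) := by
    have : distBdry T L (s, y, u) ≤ distBdry T L (s, y, (1 + δ) • u) + dist ((1 + δ) • u) u :=
      (Metric.infDist_le_infDist_add_dist (y := (s, y, (1 + δ) • u))).trans_eq
        (by simp [distBdry, Prod.dist_eq, dist_comm])
    linarith
  have hnorm : ‖y‖ + ‖(1 + δ) • u‖ ≤ K + c + ρ := by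
    rw [norm_smul, Real.norm_of_nonneg (by positivity)]
    linarith
  have hLM : (L s y ((1 + δ) • u)).toReal ≤ max M 0 :=
    ENNReal.toReal_le_of_le_ofReal (le_max_right _ _)
      ((hM s hs y _ hfin' hnorm hdist').trans (ENNReal.ofReal_le_ofReal (le_max_left _ _)))
  have hsel := hQ.toReal_add_mul_le hs y hu hfin (by positivity) hfin'
  have hQle : Q s y u ≤ max M 0 / δ := by
    rw [le_div_iff₀ hδ]
    linarith [ENNReal.toReal_nonneg (a := L s y u)]
  linarith [ENNReal.toReal_nonneg (a := L s y u)]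

/-- finiteness of the infimum well-inside the domain. -/
theorem stmt_5 (T : ℝ) (hT : 0 < T) (n m : ℕ)
    (L : ℝ → Vec n → Vec m → ℝ≥0∞)
    (hmeas : Measurable fun p : ℝ × Vec n × Vec m => L p.1 p.2.1 p.2.2)
    (U : Set (Vec m)) (hU : IsCone U)
    (hconv : RadiallyConvex T L U)
    (hbdd : BddWellInside T L)
    (Q : ℝ → Vec n → Vec m → ℝ) (hQ : IsRadialSelection T L U Q)
    (c ρ K : ℝ) (hc : 0 < c) (hρ : 0 < ρ) (hK : 0 ≤ K) :
    ∃ I : ℝ, ∀ s ∈ Icc (0:ℝ) T, ∀ y : Vec n, ‖y‖ ≤ K → ∀ u ∈ U, ‖u‖ < c →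
      L s y u ≠ ⊤ → ρ ≤ distBdry T L (s, y, u) → I ≤ (L s y u).toReal - Q s y u :=
  stmt_5_general T n m L U hbdd Q hQ c ρ K hc hρ hK
end
end

section
/- (Bound of the radial subgradient on bounded sets well-inside the domain.) Assume Λ is radially convex in the control variable and bounded on the bounded sets that are well-inside Dom(Λ), and let Q be a selection of ∂_r Λ(s,y,ru)_{r=1}. Then Q is bounded on the bounded sets that are well-inside Dom(Λ): for every C > 0 and ρ > 0 there is M ≥ 0 such that |Q(s,y,u)| ≤ M whenever (s,y,u) ∈ Dom(Λ), u ∈ 𝒰, |y| + |u| ≤ C and dist((s,y,u), ∂Dom(Λ)) ≥ ρ. -/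
open MeasureTheory Set Filter
open scoped ENNReal NNReal

noncomputable section

variable {n m : ℕ}

/-! A perturbation `r u` of the control with `|r - 1| ≤ h` moves the point by at most `h ‖u‖`,
so for `h` small it stays bounded and well inside the domain, where `Λ` is bounded by some `M`;
it cannot leave the domain, since the segment joining it to the original point would have to
cross `∂Dom(Λ)`.
The subgradient inequality `Λ(s,y,ru) ≥ Λ(s,y,u) + Q (r - 1)` at `r = 1 ± h`, together with
`Λ ≥ 0`, then gives `±h Q ≤ M`. -/

theorem IsPreconnected.exists_mem_closure_inter_closure_diff {X : Type*} [TopologicalSpace X]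
    {s t : Set X} (hs : IsPreconnected s) (hst : (s ∩ t).Nonempty) (hsdt : (s \ t).Nonempty) :
    ∃ x ∈ s, x ∈ closure (s ∩ t) ∧ x ∈ closure (s \ t) := by
  have hcover : s ⊆ closure (s ∩ t) ∪ closure (s \ t) := fun x hx => by
    by_cases hxt : x ∈ t
    · exact Or.inl (subset_closure ⟨hx, hxt⟩)
    · exact Or.inr (subset_closure ⟨hx, hxt⟩)
  obtain ⟨x, hxs, hx⟩ := isPreconnected_closed_iff.1 hs _ _ isClosed_closure isClosed_closure
    hcover (hst.mono fun x hx => ⟨hx.1, subset_closure hx⟩)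
    (hsdt.mono fun x hx => ⟨hx.1, subset_closure hx⟩)
  exact ⟨x, hxs, hx⟩

theorem infDist_closure_inter_closure_diff_le_dist {E : Type*} [NormedAddCommGroup E]
    [NormedSpace ℝ E] {A D : Set E} (hA : Convex ℝ A) {p q : E} (hpA : p ∈ A) (hpD : p ∈ D)
    (hqA : q ∈ A) (hqD : q ∉ D) :
    Metric.infDist p (closure D ∩ closure (A \ D)) ≤ dist p q := by
  obtain ⟨w, hw, hwD, hwA⟩ := (convex_segment p q).isPreconnected
    |>.exists_mem_closure_inter_closure_diff (t := D)
      ⟨p, left_mem_segment ℝ p q, hpD⟩ ⟨q, right_mem_segment ℝ p q, hqD⟩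
  have hsegA : segment ℝ p q ⊆ A := hA.segment_subset hpA hqA
  have hwb : w ∈ closure D ∩ closure (A \ D) :=
    ⟨closure_mono inter_subset_right hwD, closure_mono (sdiff_subset_sdiff_left hsegA) hwA⟩
  calc Metric.infDist p (closure D ∩ closure (A \ D))
      ≤ dist p w := Metric.infDist_le_dist_of_mem hwb
    _ ≤ dist p w + dist w q := le_add_of_nonneg_right dist_nonneg
    _ = dist p q := dist_add_dist_of_mem_segment hw

section Lagrangian

variable {n m : ℕ} {T : ℝ} {L : ℝ → Vec n → Vec m → ℝ≥0∞}

theorem distBdry_le_dist {p q : ℝ × Vec n × Vec m} (hp : p ∈ domSet T L) (hqT : q.1 ∈ Icc 0 T)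
    (hq : q ∉ domSet T L) : distBdry T L p ≤ dist p q :=
  infDist_closure_inter_closure_diff_le_dist ((convex_Icc 0 T).prod convex_univ)
    ⟨hp.1, trivial⟩ hp ⟨hqT, trivial⟩ hq

theorem mem_domSet_and_half_le_distBdry {ρ : ℝ} {p q : ℝ × Vec n × Vec m}
    (hp : p ∈ domSet T L) (hρ : 0 < ρ) (hpρ : ρ ≤ distBdry T L p) (hqT : q.1 ∈ Icc 0 T)
    (hpq : dist p q ≤ ρ / 2) : q ∈ domSet T L ∧ ρ / 2 ≤ distBdry T L q := by
  refine ⟨?_, ?_⟩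
  · by_contra hq
    linarith [distBdry_le_dist hp hqT hq]
  · unfold distBdry at hpρ ⊢
    linarith [Metric.infDist_le_infDist_add_dist (s := bdryDom T L) (x := p) (y := q)]

theorem IsRadialSelection.mul_sub_one_le {U : Set (Vec m)} {Q : ℝ → Vec n → Vec m → ℝ}
    (hQ : IsRadialSelection T L U Q) {s : ℝ} (hs : s ∈ Icc 0 T) {y : Vec n} {u : Vec m}
    (hu : u ∈ U) (hL : L s y u ≠ ⊤) {r M : ℝ} (hr : 0 < r) (hM : 0 ≤ M)
    (hLr : L s y (r • u) ≤ ENNReal.ofReal M) : Q s y u * (r - 1) ≤ M := by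
  have h := (ENNReal.ofReal_le_ofReal_iff hM).1 ((hQ s hs y u hu hL r hr).trans hLr)
  linarith [(L s y u).toReal_nonneg]

end Lagrangian

theorem dist_prodMk_smul_right {α β E : Type*} [PseudoMetricSpace α] [PseudoMetricSpace β]
    [SeminormedAddCommGroup E] [NormedSpace ℝ E] (a : α) (b : β) (u : E) (r : ℝ) :
    dist (a, b, u) (a, b, r • u) = |r - 1| * ‖u‖ := by
  have hsub : u - r • u = (1 - r) • u := by rw [sub_smul, one_smul]
  simp only [Prod.dist_eq, dist_self, dist_eq_norm, hsub, norm_smul, Real.norm_eq_abs,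
    abs_sub_comm 1 r, max_eq_right (by positivity : (0 : ℝ) ≤ |r - 1| * ‖u‖)]

theorem abs_le_div_of_mul_le {a h M : ℝ} (hh : 0 < h) (hpos : a * h ≤ M) (hneg : a * -h ≤ M) :
    |a| ≤ M / h := by
  rw [abs_le, le_div_iff₀ hh, neg_le, le_div_iff₀ hh]
  constructor <;> linarith

theorem stmt_7_general (T : ℝ) (n m : ℕ)
    (L : ℝ → Vec n → Vec m → ℝ≥0∞)
    (U : Set (Vec m))
    (hbdd : BddWellInside T L)
    (Q : ℝ → Vec n → Vec m → ℝ) (hQ : IsRadialSelection T L U Q) :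
    ∀ C > (0:ℝ), ∀ ρ > (0:ℝ), ∃ M : ℝ, 0 ≤ M ∧
      ∀ s ∈ Icc (0:ℝ) T, ∀ (y : Vec n), ∀ u ∈ U, L s y u ≠ ⊤ →
        ‖y‖ + ‖u‖ ≤ C → ρ ≤ distBdry T L (s, y, u) → |Q s y u| ≤ M := by
  intro C hC ρ hρ
  obtain ⟨M, hM⟩ := hbdd (2 * C) (by positivity) (ρ / 2) (by positivity)
  set h := min (ρ / (2 * C)) (1 / 2)
  have hh0 : 0 < h := by positivity
  have hhC : h * C ≤ ρ / 2 := by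
    calc h * C ≤ ρ / (2 * C) * C := by gcongr; exact min_le_left _ _
      _ = ρ / 2 := by field_simp
  have hh1 : h ≤ 1 / 2 := min_le_right _ _
  refine ⟨max M 0 / h, by positivity, fun s hs y u hu hL hyu hρu => ?_⟩
  have hu_le : ‖u‖ ≤ C := by linarith [norm_nonneg y]
  have hstep : ∀ r, |r - 1| = h → Q s y u * (r - 1) ≤ max M 0 := by
    intro r hr
    have hr0 : 0 < r := by linarith [neg_abs_le (r - 1)]
    have hdist : dist (s, y, u) (s, y, r • u) ≤ ρ / 2 := by
      rw [dist_prodMk_smul_right, hr]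
      nlinarith
    obtain ⟨hdom, hρr⟩ :=
      mem_domSet_and_half_le_distBdry (q := (s, y, r • u)) ⟨hs, hL⟩ hρ hρu hs hdist
    have hnorm : ‖y‖ + ‖r • u‖ ≤ 2 * C := by
      have hr_le : |r| ≤ 1 + h := by linarith [abs_sub_abs_le_abs_sub r 1, abs_one (α := ℝ)]
      rw [norm_smul, Real.norm_eq_abs]
      nlinarith [norm_nonneg u]
    exact hQ.mul_sub_one_le hs hu hL hr0 (le_max_right _ _)
      ((hM s hs y _ hdom.2 hnorm hρr).trans (ENNReal.ofReal_le_ofReal (le_max_left _ _)))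
  refine abs_le_div_of_mul_le hh0 ?_ ?_
  · simpa using hstep (1 + h) (by simp [abs_of_pos hh0])
  · simpa using hstep (1 - h) (by simp [abs_of_pos hh0])

/-- bound of the radial subgradient on bounded sets well-inside the domain. -/
theorem stmt_7 (T : ℝ) (hT : 0 < T) (n m : ℕ)
    (L : ℝ → Vec n → Vec m → ℝ≥0∞)
    (hmeas : Measurable fun p : ℝ × Vec n × Vec m => L p.1 p.2.1 p.2.2)
    (U : Set (Vec m)) (hU : IsCone U)
    (hconv : RadiallyConvex T L U)
    (hbdd : BddWellInside T L)
    (Q : ℝ → Vec n → Vec m → ℝ) (hQ : IsRadialSelection T L U Q) :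
    ∀ C > (0:ℝ), ∀ ρ > (0:ℝ), ∃ M : ℝ, 0 ≤ M ∧
      ∀ s ∈ Icc (0:ℝ) T, ∀ (y : Vec n), ∀ u ∈ U, L s y u ≠ ⊤ →
        ‖y‖ + ‖u‖ ≤ C → ρ ≤ distBdry T L (s, y, u) → |Q s y u| ≤ M :=
  stmt_7_general T n m L U hbdd Q hQ
end
end

section
/- (Uniform upper bound for the infima, calculus of variations case.) Assume Λ : [0,T] × ℝⁿ × ℝⁿ → [0,+∞) is finite valued and bounded on bounded sets (for every C > 0, sup{Λ(s,y,u) : s ∈ [0,T], |y| ≤ C, |u| ≤ C} < +∞). Suppose m = n, b(y) is the identity matrix for every y (so the dynamics is y' = u), 𝒰 = ℝⁿ, 𝒮 is nonempty and convex, and g : 𝒮 → [0,+∞] is not identically +∞. Then for every δ ∈ [0,T), δ* ≥ 0 and x* ∈ ℝⁿ there exists B ≥ 0 such that for every t ∈ [0,δ] and every x ∈ 𝒮 with |x − x*| ≤ δ* there is an admissible pair (y,u) for (P_{t,x}) with J_t(y,u) ≤ B. -/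
/-! The straight segment from `x ∈ 𝒮` to a point `z ∈ 𝒮` with `g z < ∞`, run at constant speed
on `[t, T]`, is admissible by convexity of `𝒮`. For `t ≤ δ < T` and `x` near `x*` both its
position and its speed are bounded independently of `t` and `x`, so `Λ` is uniformly bounded
along it. -/

open MeasureTheory Set Filter
open scoped ENNReal NNReal

noncomputable section

variable {n m : ℕ}

section Segment

variable {E : Type*} [NormedAddCommGroup E] [NormedSpace ℝ E]

def segmentVelocity (t T : ℝ) (x z : E) : E := (T - t)⁻¹ • (z - x)

def segmentPath (t T : ℝ) (x z : E) (s : ℝ) : E := AffineMap.lineMap x z ((s - t) / (T - t))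

lemma sub_div_sub_mem_Icc_zero_one {t T s : ℝ} (htT : t < T) (hs : s ∈ Icc t T) :
    (s - t) / (T - t) ∈ Icc (0 : ℝ) 1 :=
  ⟨div_nonneg (sub_nonneg.2 hs.1) (sub_pos.2 htT).le,
    (div_le_one (sub_pos.2 htT)).2 (sub_le_sub_right hs.2 t)⟩

lemma segmentPath_right {t T : ℝ} (htT : t ≠ T) (x z : E) : segmentPath t T x z T = z := by
  rw [segmentPath, div_self (sub_ne_zero.2 htT.symm), AffineMap.lineMap_apply_one]

lemma Convex.segmentPath_mem {S : Set E} (hS : Convex ℝ S) {x z : E} (hx : x ∈ S) (hz : z ∈ S)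
    {t T s : ℝ} (htT : t < T) (hs : s ∈ Icc t T) : segmentPath t T x z s ∈ S :=
  hS.lineMap_mem hx hz (sub_div_sub_mem_Icc_zero_one htT hs)

lemma norm_segmentPath_le {x z : E} {R : ℝ} (hx : ‖x‖ ≤ R) (hz : ‖z‖ ≤ R)
    {t T s : ℝ} (htT : t < T) (hs : s ∈ Icc t T) : ‖segmentPath t T x z s‖ ≤ R := by
  simpa using (convex_closedBall (0 : E) R).segmentPath_mem
    (mem_closedBall_zero_iff.2 hx) (mem_closedBall_zero_iff.2 hz) htT hs

lemma norm_segmentVelocity_le {x z : E} {R : ℝ} (hx : ‖x‖ ≤ R) (hz : ‖z‖ ≤ R)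
    {t T : ℝ} (htT : t < T) : ‖segmentVelocity t T x z‖ ≤ 2 * R / (T - t) := by
  have hTt : 0 < T - t := sub_pos.2 htT
  rw [segmentVelocity, norm_smul, Real.norm_eq_abs, abs_inv, abs_of_pos hTt, inv_mul_eq_div]
  gcongr
  linarith [norm_sub_le z x]

lemma segmentPath_eq_add_integral [CompleteSpace E] {t T s : ℝ} (hs : t ≤ s) (x z : E) :
    segmentPath t T x z s = x + ∫ _ in Icc t s, segmentVelocity t T x z := by
  rw [setIntegral_const, Real.volume_real_Icc_of_le hs, segmentPath,
    AffineMap.lineMap_apply_module', segmentVelocity, smul_smul, add_comm, div_eq_mul_inv]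

end Segment

lemma setLIntegral_Icc_le_of_le {f : ℝ → ℝ≥0∞} {t T M : ℝ} (hM : 0 ≤ M)
    (hf : ∀ s ∈ Icc t T, f s ≤ ENNReal.ofReal M) :
    ∫⁻ s in Icc t T, f s ≤ ENNReal.ofReal (M * (T - t)) :=
  calc ∫⁻ s in Icc t T, f s ≤ ∫⁻ _ in Icc t T, ENNReal.ofReal M :=
        setLIntegral_mono' measurableSet_Icc hf
    _ = ENNReal.ofReal (M * (T - t)) := by
        rw [setLIntegral_const, Real.volume_Icc, ENNReal.ofReal_mul hM]

lemma admissible_segment {T t : ℝ} (htT : t < T) {L : ℝ → Vec n → Vec n → ℝ≥0∞}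
    {g : Vec n → ℝ≥0∞} {S : Set (Vec n)} (hS : Convex ℝ S) {x z : Vec n} (hx : x ∈ S)
    (hz : z ∈ S)
    (hJ : Jfun T L g t (segmentPath t T x z) (fun _ => segmentVelocity t T x z) ≠ ⊤) :
    Admissible T L univ (fun _ => ContinuousLinearMap.id ℝ (Vec n)) g S t x
      (segmentPath t T x z) (fun _ => segmentVelocity t T x z) :=
  ⟨measurable_const, ae_of_all _ fun _ _ => mem_univ _,
    integrableOn_const (by simp [Real.volume_Icc]),
    fun _ hs => segmentPath_eq_add_integral hs.1 x z,
    fun _ hs => hS.segmentPath_mem hx hz htT hs, hJ⟩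

lemma jfun_segment_le {T t M : ℝ} (htT : t ≠ T) (hM : 0 ≤ M)
    {L : ℝ → Vec n → Vec n → ℝ≥0∞} (g : Vec n → ℝ≥0∞) {x z : Vec n}
    (hL : ∀ s ∈ Icc t T, L s (segmentPath t T x z s) (segmentVelocity t T x z) ≤
      ENNReal.ofReal M) :
    Jfun T L g t (segmentPath t T x z) (fun _ => segmentVelocity t T x z) ≤
      ENNReal.ofReal (M * (T - t)) + g z := by
  rw [Jfun, segmentPath_right htT]
  gcongr
  exact setLIntegral_Icc_le_of_le hM hL

theorem stmt_11_general (T : ℝ) (hT : 0 < T) (n : ℕ)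
    (L : ℝ → Vec n → Vec n → ℝ≥0∞)
    (hbdd : ∀ C > (0:ℝ), ∃ M : ℝ, ∀ s ∈ Icc (0:ℝ) T, ∀ (y u : Vec n),
      ‖y‖ ≤ C → ‖u‖ ≤ C → L s y u ≤ ENNReal.ofReal M)
    (S : Set (Vec n)) (hSconv : Convex ℝ S)
    (g : Vec n → ℝ≥0∞) (hg : ∃ z ∈ S, g z ≠ ⊤)
    (δ δs : ℝ) (hδT : δ < T) (hδs : 0 ≤ δs) (xs : Vec n) :
    ∃ B ≥ (0:ℝ), ∀ t ∈ Icc (0:ℝ) δ, ∀ x ∈ S, ‖x - xs‖ ≤ δs →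
      ∃ (y : ℝ → Vec n) (u : ℝ → Vec n),
        Admissible T L univ (fun _ => ContinuousLinearMap.id ℝ (Vec n)) g S t x y u ∧
        Jfun T L g t y u ≤ ENNReal.ofReal B := by
  obtain ⟨z, hzS, hgz⟩ := hg
  set R := ‖xs‖ + δs + ‖z‖
  have hR : 0 ≤ R := by positivity
  have hvR : 0 ≤ 2 * R / (T - δ) := div_nonneg (by positivity) (sub_pos.2 hδT).le
  obtain ⟨M, hM⟩ := hbdd (R + 2 * R / (T - δ) + 1) (by positivity)
  refine ⟨max M 0 * T + (g z).toReal, by positivity, fun t ht x hx hxs => ?_⟩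
  have htT : t < T := ht.2.trans_lt hδT
  have hxR : ‖x‖ ≤ R := by linarith [norm_le_norm_add_norm_sub' x xs, norm_nonneg z]
  have hzR : ‖z‖ ≤ R := by linarith [norm_nonneg xs]
  have hspeed : 2 * R / (T - t) ≤ 2 * R / (T - δ) := by gcongr; exact ht.2
  have hJ : Jfun T L g t (segmentPath t T x z) (fun _ => segmentVelocity t T x z) ≤
      ENNReal.ofReal (max M 0 * T + (g z).toReal) := by
    refine (jfun_segment_le htT.ne (le_max_right M 0) g fun s hs => ?_).trans ?_
    · have hpos := norm_segmentPath_le hxR hzR htT hs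
      have hvel := norm_segmentVelocity_le hxR hzR htT
      exact (hM s ⟨ht.1.trans hs.1, hs.2⟩ _ _ (by linarith) (by linarith)).trans
        (ENNReal.ofReal_le_ofReal (le_max_left M 0))
    · rw [ENNReal.ofReal_add (by positivity) ENNReal.toReal_nonneg, ENNReal.ofReal_toReal hgz]
      gcongr
      linarith [ht.1]
  exact ⟨_, _, admissible_segment htT hSconv hx hzS
    (ne_top_of_le_ne_top ENNReal.ofReal_ne_top hJ), hJ⟩

/-- uniform upper bound for the infima, calculus of variations case. -/
theorem stmt_11 (T : ℝ) (hT : 0 < T) (n : ℕ)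
    (L : ℝ → Vec n → Vec n → ℝ≥0∞)
    (hmeas : Measurable fun p : ℝ × Vec n × Vec n => L p.1 p.2.1 p.2.2)
    (hfin : ∀ s ∈ Icc (0:ℝ) T, ∀ (y u : Vec n), L s y u ≠ ⊤)
    (hbdd : ∀ C > (0:ℝ), ∃ M : ℝ, ∀ s ∈ Icc (0:ℝ) T, ∀ (y u : Vec n),
      ‖y‖ ≤ C → ‖u‖ ≤ C → L s y u ≤ ENNReal.ofReal M)
    (S : Set (Vec n)) (hS : S.Nonempty) (hSconv : Convex ℝ S)
    (g : Vec n → ℝ≥0∞) (hg : ∃ z ∈ S, g z ≠ ⊤)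
    (δ δs : ℝ) (hδ0 : 0 ≤ δ) (hδT : δ < T) (hδs : 0 ≤ δs) (xs : Vec n) :
    ∃ B ≥ (0:ℝ), ∀ t ∈ Icc (0:ℝ) δ, ∀ x ∈ S, ‖x - xs‖ ≤ δs →
      ∃ (y : ℝ → Vec n) (u : ℝ → Vec n),
        Admissible T L univ (fun _ => ContinuousLinearMap.id ℝ (Vec n)) g S t x y u ∧
        Jfun T L g t y u ≤ ENNReal.ofReal B :=
  stmt_11_general T hT n L hbdd S hSconv g hg δ δs hδT hδs xs
end
end

section
/- (Uniform upper bound for the infima, real-valued cost case.) Assume Λ : [0,T] × ℝⁿ × ℝᵐ → [0,+∞) is finite valued and bounded on bounded sets (for every C > 0, sup{Λ(s,y,u) : s ∈ [0,T], |y| ≤ C, |u| ≤ C} < +∞), that 0 ∈ 𝒰, and that the cost g : 𝒮 → [0,+∞) is real valued and locally bounded. Then for every δ ∈ [0,T), δ* ≥ 0 and x* ∈ ℝⁿ there exists B ≥ 0 such that for every t ∈ [0,δ] and every x ∈ 𝒮 with |x − x*| ≤ δ* there is an admissible pair (y,u) for (P_{t,x}) with J_t(y,u) ≤ B. -/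
open MeasureTheory Set Filter
open scoped ENNReal NNReal

noncomputable section

variable {n m : ℕ}

/-
The pair at rest, `u ≡ 0` and `y ≡ x`, is admissible as soon as `0 ∈ U`, and its cost is at most
`(T - t) · sup L + sup g`, the suprema taken over a ball containing all the initial points considered.
-/

theorem admissible_rest {T : ℝ} {L : ℝ → Vec n → Vec m → ℝ≥0∞} {U : Set (Vec m)}
    {b : Vec n → Vec m →L[ℝ] Vec n} {g : Vec n → ℝ≥0∞} {S : Set (Vec n)} {t : ℝ} {x : Vec n}
    (h0U : (0 : Vec m) ∈ U) (hxS : x ∈ S) (hJ : Jfun T L g t (fun _ => x) (fun _ => 0) ≠ ⊤) :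
    Admissible T L U b g S t x (fun _ => x) (fun _ => 0) := by
  refine ⟨measurable_const, ?_, ?_, fun s _ => ?_, fun _ _ => hxS, hJ⟩
  · exact ae_of_all _ fun _ _ => h0U
  · simp
  · simp

theorem Jfun_le_of_le {T : ℝ} {L : ℝ → Vec n → Vec m → ℝ≥0∞} {g : Vec n → ℝ≥0∞} {t : ℝ}
    {y : ℝ → Vec n} {u : ℝ → Vec m} {M₁ M₂ : ℝ} (hM₁ : 0 ≤ M₁) (hM₂ : 0 ≤ M₂) (htT : t ≤ T)
    (hL : ∀ s ∈ Icc t T, L s (y s) (u s) ≤ ENNReal.ofReal M₁)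
    (hg : g (y T) ≤ ENNReal.ofReal M₂) :
    Jfun T L g t y u ≤ ENNReal.ofReal (M₁ * (T - t) + M₂) := by
  have hint : ∫⁻ s in Icc t T, L s (y s) (u s) ≤ ENNReal.ofReal (M₁ * (T - t)) :=
    calc ∫⁻ s in Icc t T, L s (y s) (u s)
        ≤ ∫⁻ _ in Icc t T, ENNReal.ofReal M₁ := setLIntegral_mono measurable_const hL
      _ = ENNReal.ofReal (M₁ * (T - t)) := by
        rw [setLIntegral_const, Real.volume_Icc, ENNReal.ofReal_mul hM₁]
  rw [ENNReal.ofReal_add (mul_nonneg hM₁ (sub_nonneg.2 htT)) hM₂]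
  exact add_le_add hint hg

theorem stmt_12_general (T : ℝ) (hT : 0 < T) (n m : ℕ)
    (L : ℝ → Vec n → Vec m → ℝ≥0∞)
    (hbdd : ∀ C > (0:ℝ), ∃ M : ℝ, ∀ s ∈ Icc (0:ℝ) T, ∀ (y : Vec n) (u : Vec m),
      ‖y‖ ≤ C → ‖u‖ ≤ C → L s y u ≤ ENNReal.ofReal M)
    (U : Set (Vec m)) (h0U : (0 : Vec m) ∈ U)
    (b : Vec n → Vec m →L[ℝ] Vec n)
    (S : Set (Vec n))
    (g : Vec n → ℝ≥0∞)
    (hgloc : ∀ C > (0:ℝ), ∃ M : ℝ, ∀ x ∈ S, ‖x‖ ≤ C → g x ≤ ENNReal.ofReal M)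
    (δ δs : ℝ) (hδT : δ < T) (hδs : 0 ≤ δs) (xs : Vec n) :
    ∃ B ≥ (0:ℝ), ∀ t ∈ Icc (0:ℝ) δ, ∀ x ∈ S, ‖x - xs‖ ≤ δs →
      ∃ (y : ℝ → Vec n) (u : ℝ → Vec m),
        Admissible T L U b g S t x y u ∧ Jfun T L g t y u ≤ ENNReal.ofReal B := by
  set C := ‖xs‖ + δs + 1
  have hC : 0 < C := by positivity
  obtain ⟨M₁, hL⟩ := hbdd C hC
  obtain ⟨M₂, hg⟩ := hgloc C hC
  refine ⟨max M₁ 0 * T + max M₂ 0, by positivity, fun t ht x hxS hx => ?_⟩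
  have hxC : ‖x‖ ≤ C := by linarith [norm_le_norm_add_norm_sub' x xs]
  have hJ : Jfun T L g t (fun _ => x) (fun _ => 0) ≤
      ENNReal.ofReal (max M₁ 0 * T + max M₂ 0) := by
    refine (Jfun_le_of_le (le_max_right M₁ 0) (le_max_right M₂ 0) (ht.2.trans hδT.le)
      (fun s hs => ?_) ?_).trans ?_
    · exact (hL s ⟨ht.1.trans hs.1, hs.2⟩ x 0 hxC (by simpa using hC.le)).trans
        (ENNReal.ofReal_le_ofReal (le_max_left _ _))
    · exact (hg x hxS hxC).trans (ENNReal.ofReal_le_ofReal (le_max_left _ _))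
    · gcongr; linarith [ht.1]
  exact ⟨_, _, admissible_rest h0U hxS (ne_top_of_le_ne_top ENNReal.ofReal_ne_top hJ), hJ⟩

/-- uniform upper bound for the infima, real-valued cost case. -/
theorem stmt_12 (T : ℝ) (hT : 0 < T) (n m : ℕ)
    (L : ℝ → Vec n → Vec m → ℝ≥0∞)
    (hmeas : Measurable fun p : ℝ × Vec n × Vec m => L p.1 p.2.1 p.2.2)
    (hfin : ∀ s ∈ Icc (0:ℝ) T, ∀ (y : Vec n) (u : Vec m), L s y u ≠ ⊤)
    (hbdd : ∀ C > (0:ℝ), ∃ M : ℝ, ∀ s ∈ Icc (0:ℝ) T, ∀ (y : Vec n) (u : Vec m),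
      ‖y‖ ≤ C → ‖u‖ ≤ C → L s y u ≤ ENNReal.ofReal M)
    (U : Set (Vec m)) (hU : IsCone U) (h0U : (0 : Vec m) ∈ U)
    (b : Vec n → Vec m →L[ℝ] Vec n) (hbmeas : Measurable b)
    (θ : ℝ) (hθ : 0 ≤ θ) (hb : ∀ y, ‖b y‖ ≤ θ * (1 + ‖y‖))
    (S : Set (Vec n)) (hS : S.Nonempty)
    (g : Vec n → ℝ≥0∞) (hgfin : ∀ x ∈ S, g x ≠ ⊤)
    (hgloc : ∀ C > (0:ℝ), ∃ M : ℝ, ∀ x ∈ S, ‖x‖ ≤ C → g x ≤ ENNReal.ofReal M)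
    (δ δs : ℝ) (hδ0 : 0 ≤ δ) (hδT : δ < T) (hδs : 0 ≤ δs) (xs : Vec n) :
    ∃ B ≥ (0:ℝ), ∀ t ∈ Icc (0:ℝ) δ, ∀ x ∈ S, ‖x - xs‖ ≤ δs →
      ∃ (y : ℝ → Vec n) (u : ℝ → Vec m),
        Admissible T L U b g S t x y u ∧ Jfun T L g t y u ≤ ENNReal.ofReal B :=
  stmt_12_general T hT n m L hbdd U h0U b S g hgloc δ δs hδT hδs xs
end
end
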